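/- arXiv:math/0310195 — 3 statements merged into one kernel-verified Lean document; each statement's English description precedes it below -/
import Mathlib

section
/- If K is an invertible n×n real matrix and 1 ≤ k ≤ n−1, then K is k-non-degenerate if and only if K⁻¹ is (n−k)-non-degenerate. -/
/-!
A square submatrix `M[R, C]` is singular exactly when some nonzero vector `x` supported on `C`
is mapped by `M` into a vector vanishing on `R`. If `M⁻¹[R, C]` is singular, witnessed by `x`,
then `y = M⁻¹ x` is a nonzero vector supported on `Rᶜ` with `M y = x` vanishing on `Cᶜ`, so the
complementary submatrix `M[Cᶜ, Rᶜ]` is singular too. Applying this to `M` and to `M⁻¹` shows that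
all `m × m` minors of `M` are nonzero iff all `p × p` minors of `M⁻¹` are, whenever `m + p = n`.
-/

/-- `K` is `k`-non-degenerate: every `(n-k) × (n-k)` minor of `K` (obtained by
deleting `k` rows and `k` columns) has nonzero determinant. -/
def kNonDegenerate {n : ℕ} (K : Matrix (Fin n) (Fin n) ℝ) (k : ℕ) : Prop :=
  ∀ r c : Fin (n - k) ↪ Fin n, (K.submatrix r c).det ≠ 0

open Function Set

theorem Function.Embedding.exists_range_eq_compl {ι : Type*} [Fintype ι] {m p : ℕ}
    (hcard : m + p = Fintype.card ι) (e : Fin p ↪ ι) :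
    ∃ e' : Fin m ↪ ι, range e' = (range e)ᶜ := by
  classical
  have hcompl : Fintype.card ↥(range e)ᶜ = m := by
    rw [Fintype.card_compl_set, Fintype.card_range, Fintype.card_fin]
    omega
  let f := (Fintype.equivFinOfCardEq hcompl).symm
  refine ⟨f.toEmbedding.trans (Embedding.subtype _), ?_⟩
  change range (Subtype.val ∘ f) = _
  rw [range_comp, f.range_eq_univ, image_univ, Subtype.range_coe]

namespace Matrix

theorem submatrix_mulVec_comp {α β ι κ R : Type*} [Fintype β] [Fintype κ]
    [NonUnitalNonAssocSemiring R] (A : Matrix ι κ R) (r : α → ι) (c : β ↪ κ) {x : κ → R}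
    (hx : support x ⊆ range c) : A.submatrix r c *ᵥ (x ∘ c) = (A *ᵥ x) ∘ r := by
  ext i
  refine Fintype.sum_of_injective c c.injective _ _ (fun j hj => ?_) (fun _ => rfl)
  change A (r i) j * x j = 0
  rw [notMem_support.mp (fun hxj => hj (hx hxj)), mul_zero]

variable {ι R : Type*} [CommRing R] [IsDomain R]

theorem det_submatrix_eq_zero_iff {κ : Type*} [Fintype κ] {m : ℕ} (A : Matrix ι κ R)
    (r : Fin m → ι) (c : Fin m ↪ κ) :
    (A.submatrix r c).det = 0 ↔
      ∃ x : κ → R, x ≠ 0 ∧ support x ⊆ range c ∧ EqOn (A *ᵥ x) 0 (range r) := by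
  rw [← exists_mulVec_eq_zero_iff]
  constructor
  · rintro ⟨v, hv, hAv⟩
    have hsupp : support (extend c v 0) ⊆ range c := fun j hj =>
      by_contra fun hjc => hj (extend_apply' _ _ _ hjc)
    have hcomp : extend c v 0 ∘ c = v := extend_comp c.injective v 0
    refine ⟨extend c v 0, fun h => hv ?_, hsupp, ?_⟩
    · rw [← hcomp, h]; rfl
    · rintro _ ⟨i, rfl⟩
      have := congrFun (submatrix_mulVec_comp A r c hsupp) i
      rw [hcomp, hAv] at this
      exact this.symm
  · rintro ⟨x, hx, hsupp, hAx⟩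
    refine ⟨x ∘ c, fun h => hx ?_, ?_⟩
    · ext j
      by_contra hj
      obtain ⟨i, rfl⟩ := hsupp hj
      exact hj (congrFun h i)
    · rw [submatrix_mulVec_comp A r c hsupp]
      ext i
      exact hAx (mem_range_self i)

variable [Fintype ι] [DecidableEq ι]

theorem det_submatrix_compl_eq_zero {m p : ℕ} {M : Matrix ι ι R} (hM : IsUnit M)
    (r c : Fin p ↪ ι) (r' c' : Fin m ↪ ι) (hr : range r' = (range r)ᶜ)
    (hc : range c' = (range c)ᶜ) (h : (M⁻¹.submatrix r c).det = 0) :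
    (M.submatrix c' r').det = 0 := by
  obtain ⟨x, hx, hsupp, hM'x⟩ := (det_submatrix_eq_zero_iff _ r c).mp h
  have hMy : M *ᵥ (M⁻¹ *ᵥ x) = x := by
    rw [mulVec_mulVec, mul_nonsing_inv _ ((isUnit_iff_isUnit_det M).mp hM), one_mulVec]
  refine (det_submatrix_eq_zero_iff _ c' r').mpr ⟨M⁻¹ *ᵥ x, ?_, ?_, ?_⟩
  · intro hy
    rw [hy, mulVec_zero] at hMy
    exact hx hMy.symm
  · rw [hr]
    exact fun j hj hjr => hj (hM'x hjr)
  · rw [hMy, hc]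
    exact fun j hj => notMem_support.mp (fun hxj => hj (hsupp hxj))

theorem forall_det_submatrix_inv_ne_zero {m p : ℕ} (hcard : m + p = Fintype.card ι)
    {M : Matrix ι ι R} (hM : IsUnit M)
    (hminors : ∀ r c : Fin m ↪ ι, (M.submatrix r c).det ≠ 0) :
    ∀ r c : Fin p ↪ ι, (M⁻¹.submatrix r c).det ≠ 0 := by
  intro r c h
  obtain ⟨r', hr⟩ := Embedding.exists_range_eq_compl hcard r
  obtain ⟨c', hc⟩ := Embedding.exists_range_eq_compl hcard c
  exact hminors c' r' (det_submatrix_compl_eq_zero hM r c r' c' hr hc h)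

theorem forall_det_submatrix_ne_zero_iff_inv {m p : ℕ} (hcard : m + p = Fintype.card ι)
    {M : Matrix ι ι R} (hM : IsUnit M) :
    (∀ r c : Fin m ↪ ι, (M.submatrix r c).det ≠ 0) ↔
      ∀ r c : Fin p ↪ ι, (M⁻¹.submatrix r c).det ≠ 0 := by
  refine ⟨forall_det_submatrix_inv_ne_zero hcard hM, fun hinv => ?_⟩
  rw [← nonsing_inv_nonsing_inv M ((isUnit_iff_isUnit_det M).mp hM)]
  exact forall_det_submatrix_inv_ne_zero (by omega) (isUnit_nonsing_inv_iff.mpr hM) hinv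

end Matrix

theorem stmt_1_general {n k : ℕ} (K : Matrix (Fin n) (Fin n) ℝ) (hK : IsUnit K) :
    kNonDegenerate K k ↔ kNonDegenerate K⁻¹ (n - k) :=
  Matrix.forall_det_submatrix_ne_zero_iff_inv (by rw [Fintype.card_fin]; omega) hK

/-- If `K` is an invertible `n × n` real matrix and `1 ≤ k ≤ n - 1`,
then `K` is `k`-non-degenerate iff `K⁻¹` is `(n-k)`-non-degenerate. -/
theorem stmt_1 {n k : ℕ} (K : Matrix (Fin n) (Fin n) ℝ) (hK : IsUnit K)
    (hk1 : 1 ≤ k) (hk2 : k ≤ n - 1) :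
    kNonDegenerate K k ↔ kNonDegenerate K⁻¹ (n - k) :=
  stmt_1_general K hK
end

section
/- If A is a k-cut of a balanced bipartite graph G, then every perfect matching of G contains exactly k edges connecting A to its complement, and each such edge joins a black vertex of A to a white vertex of the complement of A. -/
/-!
A perfect matching is an involution `f` that swaps the two colour classes. The vertices of `A`
matched inside `A` form an `f`-invariant set, so they are half black and half white. Every white
vertex of `A` is among them, because a matching edge leaving `A` starts at a black vertex. Hence the
excess `k` of black over white vertices in `A` is exactly the number of matching edges leaving `A`.
-/

namespace Finset

variable {V : Type*} {p : V → Prop} [DecidablePred p] {f : V → V}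

theorem card_filter_eq_card_filter_not_of_involutive {S : Finset V}
    (hf : Function.Involutive f) (hS : ∀ v ∈ S, f v ∈ S) (hp : ∀ v, p v ↔ ¬ p (f v)) :
    (S.filter p).card = (S.filter (fun v => ¬ p v)).card := by
  refine card_nbij' f f ?_ ?_ (fun v _ => hf v) (fun v _ => hf v)
  · intro v hv
    rw [mem_coe, mem_filter] at hv ⊢
    exact ⟨hS v hv.1, (hp v).1 hv.2⟩
  · intro v hv
    rw [mem_coe, mem_filter] at hv ⊢
    exact ⟨hS v hv.1, not_not.1 (mt (hp v).2 hv.2)⟩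

theorem card_filter_eq_card_filter_not_add_card_filter_not_mem [DecidableEq V] {A : Finset V}
    (hf : Function.Involutive f) (hp : ∀ v, p v ↔ ¬ p (f v))
    (hcross : ∀ v ∈ A, f v ∉ A → p v) :
    (A.filter p).card = (A.filter (fun v => ¬ p v)).card + (A.filter (fun v => f v ∉ A)).card := by
  set S := A.filter (fun v => f v ∈ A)
  have hS : ∀ v ∈ S, f v ∈ S := fun v hv => by
    simp only [S, mem_filter, hf v] at hv ⊢
    exact ⟨hv.2, hv.1⟩
  have hinside : (A.filter p).filter (fun v => f v ∈ A) = S.filter p := filter_comm _ _ _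
  have hleaving : (A.filter p).filter (fun v => f v ∉ A) = A.filter (fun v => f v ∉ A) := by
    rw [filter_filter]
    exact filter_congr fun v hv => ⟨And.right, fun hfv => ⟨hcross v hv hfv, hfv⟩⟩
  have hnot : A.filter (fun v => ¬ p v) = S.filter (fun v => ¬ p v) := by
    rw [filter_filter]
    exact filter_congr fun v hv => ⟨fun hnp => ⟨not_not.1 (mt (hcross v hv) hnp), hnp⟩, And.right⟩
  rw [← card_filter_add_card_filter_not (s := A.filter p) (fun v => f v ∈ A), hinside, hleaving,
    hnot, card_filter_eq_card_filter_not_of_involutive hf hS hp]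

end Finset

theorem stmt_3_general {V : Type*} [DecidableEq V]
    (G : SimpleGraph V) (black : V → Prop) [DecidablePred black]
    (hbip : ∀ u v, G.Adj u v → (black u ↔ ¬ black v))
    (k : ℕ) (A : Finset V)
    (hA2 : (A.filter black).card = (A.filter (fun v => ¬ black v)).card + k)
    (hA3 : ∀ u v, G.Adj u v → u ∈ A → v ∉ A → black u)
    (f : V → V) (hinv : Function.Involutive f) (hadj : ∀ v, G.Adj v (f v)) :
    (A.filter (fun v => f v ∉ A)).card = k ∧
      ∀ v ∈ A, f v ∉ A → black v ∧ ¬ black (f v) := by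
  have hswap : ∀ v, black v ↔ ¬ black (f v) := fun v => hbip v (f v) (hadj v)
  have hcross : ∀ v ∈ A, f v ∉ A → black v := fun v hv hfv => hA3 v (f v) (hadj v) hv hfv
  refine ⟨?_, fun v hv hfv => ⟨hcross v hv hfv, (hswap v).1 (hcross v hv hfv)⟩⟩
  have hcount := Finset.card_filter_eq_card_filter_not_add_card_filter_not_mem hinv hswap hcross
  omega

/-- If `A` is a `k`-cut of a balanced bipartite graph `G` (colors given
by `black`), then every perfect matching of `G` (encoded by an adjacency-preserving
involution `f`) contains exactly `k` edges connecting `A` to its complement, and each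
such edge joins a black vertex of `A` to a white vertex of the complement of `A`. -/
theorem stmt_3 {V : Type*} [Fintype V] [DecidableEq V]
    (G : SimpleGraph V) (black : V → Prop) [DecidablePred black]
    (hbip : ∀ u v, G.Adj u v → (black u ↔ ¬ black v))
    (hbal : (Finset.univ.filter black).card
      = (Finset.univ.filter (fun v => ¬ black v)).card)
    (k : ℕ) (A : Finset V)
    (hA1 : ∃ w ∈ A, ¬ black w)
    (hA2 : (A.filter black).card = (A.filter (fun v => ¬ black v)).card + k)
    (hA3 : ∀ u v, G.Adj u v → u ∈ A → v ∉ A → black u)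
    (f : V → V) (hinv : Function.Involutive f) (hadj : ∀ v, G.Adj v (f v)) :
    (A.filter (fun v => f v ∉ A)).card = k ∧
      ∀ v ∈ A, f v ∉ A → black v ∧ ¬ black (f v) :=
  stmt_3_general G black hbip k A hA2 hA3 f hinv hadj
end

section
/- Let P be a polynomial in variables ν(e) (indexed by the edges e of a finite connected balanced bipartite graph G without unused edges) and α, β, whose monomials in the ν-variables are exactly the products ∏_{e∈M} ν(e) over perfect matchings M of G (each with a nonzero coefficient that is a monomial in α,β times a sign, and each matching occurring in exactly one monomial). If P = P₁P₂ is any factorization, then one of the factors is a monomial in α and β alone. -/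
/-!
Every variable `ν(e)` occurs in `P` with degree at most one, so by additivity of degrees in a
domain it occurs in at most one factor, and (no unused edges) in exactly one. Two distinct edges
at a common vertex never occur in the same matching; if they sat in different factors, the product
would contain a monomial involving both. Hence the factor containing an edge contains every edge
at its endpoints, and by connectivity all edges. The other factor `Q` involves only `α, β`;
substituting `0` for the edges outside one perfect matching fixes `Q` and turns `P` into a single
monomial, and divisors of a monomial over a domain are monomials.
-/

namespace MvPolynomial

variable {R σ τ : Type*}

section CommSemiring

variable [CommSemiring R] {p q : MvPolynomial σ R}

theorem aeval_congr_vars {g₁ g₂ : σ → MvPolynomial τ R} (h : ∀ i ∈ p.vars, g₁ i = g₂ i) :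
    aeval g₁ p = aeval g₂ p :=
  eval₂Hom_congr' rfl (fun i hi _ => h i hi) rfl

theorem aeval_eq_self_of_forall_mem_vars {g : σ → MvPolynomial σ R}
    (h : ∀ i ∈ p.vars, g i = X i) : aeval g p = p :=
  (aeval_congr_vars h).trans (aeval_X_left_apply p)

theorem rename_congr_vars {f₁ f₂ : σ → τ} (h : ∀ i ∈ p.vars, f₁ i = f₂ i) :
    rename f₁ p = rename f₂ p := by
  rw [rename_eq_aeval, rename_eq_aeval]
  exact aeval_congr_vars fun i hi => congrArg X (h i hi)

theorem exists_monomial_eq_C_mul_X_pow_mul_X_pow {ι : Type*} {m : ι ⊕ Fin 2 →₀ ℕ} {r : R}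
    (h : ∀ e, Sum.inl e ∉ (monomial m r).vars) :
    ∃ (r' : R) (i j : ℕ), monomial m r = C r' * X (Sum.inr 0) ^ i * X (Sum.inr 1) ^ j := by
  by_cases hr : r = 0
  · exact ⟨0, 0, 0, by simp [hr]⟩
  refine ⟨r, m (Sum.inr 0), m (Sum.inr 1), ?_⟩
  have hm : m = Finsupp.single (Sum.inr 0) (m (Sum.inr 0)) +
      Finsupp.single (Sum.inr 1) (m (Sum.inr 1)) := by
    ext x
    rcases x with e | i
    · simpa [vars_monomial hr] using h e
    · fin_cases i <;> simp
  rw [C_mul_X_pow_eq_monomial, X_pow_eq_monomial, monomial_mul, mul_one, ← hm]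

variable [NoZeroDivisors R]

theorem mem_vars_mul_iff_of_ne_zero (hp : p ≠ 0) (hq : q ≠ 0) {i : σ} :
    i ∈ (p * q).vars ↔ i ∈ p.vars ∨ i ∈ q.vars := by
  simp only [mem_vars_iff_degreeOf_ne_zero, degreeOf_mul_eq hp hq]
  omega

theorem exists_mem_support_mul_degreeOf_add_degreeOf_le [DecidableEq σ] {u v : σ} (huv : u ≠ v)
    (hp : p ≠ 0) (hq : q ≠ 0) (hvp : v ∉ p.vars) (huq : u ∉ q.vars) :
    ∃ m ∈ (p * q).support, p.degreeOf u + q.degreeOf v ≤ m u + m v := by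
  -- Identifying `v` with `u` is `id` on `p` and the swap on `q`, so the `u`-degrees add up.
  set g : σ → σ := fun i => if i = v then u else i
  have hgp : rename g p = p :=
    (rename_congr_vars (f₂ := id) fun i hi => if_neg (ne_of_mem_of_not_mem hi hvp)).trans
      (rename_id_apply p)
  have hgq : rename g q = rename (Equiv.swap u v) q :=
    rename_congr_vars fun i hi => by
      simp [g, Equiv.swap_apply_def, ne_of_mem_of_not_mem hi huq]
  have hq' : rename (Equiv.swap u v) q ≠ 0 :=
    (map_ne_zero_iff _ (rename_injective _ (Equiv.injective _))).2 hq
  have hne : rename g (p * q) ≠ 0 := by rw [map_mul, hgp, hgq]; exact mul_ne_zero hp hq'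
  have hdeg : (rename g (p * q)).degreeOf u = p.degreeOf u + q.degreeOf v := by
    have hswap := degreeOf_rename_of_injective (p := q) (Equiv.swap u v).injective v
    rw [Equiv.swap_apply_right] at hswap
    rw [map_mul, hgp, hgq, degreeOf_mul_eq hp hq', hswap]
  obtain ⟨m', hm', hm'u⟩ := Finset.exists_mem_eq_sup _ (support_nonempty.2 hne) (fun m => m u)
  obtain ⟨m, rfl, hm⟩ := coeff_rename_ne_zero g _ m' (mem_support_iff.1 hm')
  refine ⟨m, mem_support_iff.2 hm, ?_⟩
  have hgu : g u = u := if_neg huv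
  calc p.degreeOf u + q.degreeOf v = (m.mapDomain g) (g u) := by
        rw [← hdeg, degreeOf_eq_sup, hm'u, hgu]
    _ = ∑ i ∈ m.support with g i = g u, m i := Finsupp.mapDomain_apply_eq_sum g m
    _ ≤ ∑ i ∈ {u, v}, m i := Finset.sum_le_sum_of_subset (fun i hi => by
        simp only [Finset.mem_filter, hgu, g] at hi
        split_ifs at hi with h <;> simp [h, hi.2])
    _ = m u + m v := Finset.sum_pair huv

end CommSemiring

end MvPolynomial

open MvPolynomial

section Matching

variable {B W : Type*}

def bipartiteRel (Adj : B → W → Prop) (x y : B ⊕ W) : Prop :=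
  ∃ b w, Adj b w ∧ ((x = Sum.inl b ∧ y = Sum.inr w) ∨ (x = Sum.inr w ∧ y = Sum.inl b))

theorem forall_adj_of_connected {Adj : B → W → Prop}
    (hconn : ∀ x y, Relation.ReflTransGen (bipartiteRel Adj) x y) (S : B → W → Prop)
    (hB : ∀ b w w', Adj b w → Adj b w' → S b w → S b w')
    (hW : ∀ b b' w, Adj b w → Adj b' w → S b w → S b' w)
    {b₀ : B} {w₀ : W} (h₀ : Adj b₀ w₀) (hS₀ : S b₀ w₀) {b : B} {w : W} (h : Adj b w) :
    S b w := by
  let T : B ⊕ W → Prop := fun x =>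
    ∃ b w, Adj b w ∧ S b w ∧ (x = Sum.inl b ∨ x = Sum.inr w)
  have hstep : ∀ x y, bipartiteRel Adj x y → T x → T y := by
    rintro x y ⟨b, w, hbw, ⟨rfl, rfl⟩ | ⟨rfl, rfl⟩⟩ ⟨b', w', hbw', hS, hx⟩
    · obtain rfl : b = b' := by simpa using hx
      exact ⟨b, w, hbw, hB _ _ _ hbw' hbw hS, Or.inr rfl⟩
    · obtain rfl : w = w' := by simpa using hx
      exact ⟨b, w, hbw, hW _ _ _ hbw' hbw hS, Or.inl rfl⟩
  have hT : ∀ y, Relation.ReflTransGen (bipartiteRel Adj) (Sum.inl b₀) y → T y := by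
    intro y hy
    induction hy with
    | refl => exact ⟨b₀, w₀, h₀, hS₀, Or.inl rfl⟩
    | tail _ hyz ih => exact hstep _ _ hyz ih
  obtain ⟨b', w', hbw', hS, hx⟩ := hT _ (hconn _ (Sum.inl b))
  obtain rfl : b = b' := by simpa using hx
  exact hB _ _ _ hbw' h hS

variable [Fintype B] {R : Type*}

noncomputable def matchingExponent (f : B ≃ W) (i j : ℕ) : (B × W) ⊕ Fin 2 →₀ ℕ :=
  ∑ b, Finsupp.single (Sum.inl (b, f b)) 1 + Finsupp.single (Sum.inr 0) i +
    Finsupp.single (Sum.inr 1) j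

theorem monomial_matchingExponent [CommSemiring R] (f : B ≃ W) (i j : ℕ) (c : R) :
    monomial (matchingExponent f i j) c =
      C c * X (Sum.inr 0) ^ i * X (Sum.inr 1) ^ j * ∏ b, X (Sum.inl (b, f b)) := by
  have hprod : ∏ b, (X (Sum.inl (b, f b)) : MvPolynomial ((B × W) ⊕ Fin 2) R) =
      monomial (∑ b, Finsupp.single (Sum.inl (b, f b)) 1) 1 := by
    rw [monomial_sum_one]; rfl
  rw [hprod, X_pow_eq_monomial, X_pow_eq_monomial, C_mul_monomial, monomial_mul, monomial_mul,
    matchingExponent, mul_one, mul_one, mul_one, add_rotate]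

variable [DecidableEq W]

theorem matchingExponent_inl (f : B ≃ W) (i j : ℕ) (b : B) (w : W) :
    matchingExponent f i j (Sum.inl (b, w)) = if f b = w then 1 else 0 := by
  classical
  rw [matchingExponent, Finsupp.add_apply, Finsupp.add_apply, Finsupp.finsetSum_apply,
    Finset.sum_eq_single b (fun c _ hc => Finsupp.single_eq_of_ne (by simp [Ne.symm hc]))
      (by simp)]
  simp [Finsupp.single_apply]

theorem eq_of_matchingExponent_eq {f g : B ≃ W} {i j i' j' : ℕ}
    (h : matchingExponent f i j = matchingExponent g i' j') : f = g := by
  ext b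
  have := DFunLike.congr_fun h (Sum.inl (b, f b))
  simp only [matchingExponent_inl, if_pos] at this
  by_contra hne
  simp [Ne.symm hne] at this

noncomputable def killEdgesOutside [CommSemiring R] (f : B ≃ W) :
    (B × W) ⊕ Fin 2 → MvPolynomial ((B × W) ⊕ Fin 2) R :=
  Sum.elim (fun e => if f e.1 = e.2 then X (Sum.inl e) else 0) (fun i => X (Sum.inr i))

theorem aeval_killEdgesOutside_monomial_matchingExponent [CommSemiring R] (f g : B ≃ W) (i j : ℕ)
    (c : R) :
    aeval (killEdgesOutside f) (monomial (matchingExponent g i j) c) =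
      if g = f then monomial (matchingExponent g i j) c else 0 := by
  split_ifs with hgf
  · subst hgf
    rw [monomial_matchingExponent]
    simp [killEdgesOutside]
  · obtain ⟨b, hb⟩ : ∃ b, g b ≠ f b := by
      by_contra! h
      exact hgf (Equiv.ext h)
    rw [monomial_matchingExponent, map_mul, map_prod,
      Finset.prod_eq_zero (Finset.mem_univ b) (by simp [killEdgesOutside, Ne.symm hb]), mul_zero]

variable [Fintype W] [DecidableEq B]

def NoUnusedEdges (Adj : B → W → Prop) : Prop :=
  ∀ b w, Adj b w → ∃ f : B ≃ W, (∀ b', Adj b' (f b')) ∧ f b = w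

def perfectMatchings (Adj : B → W → Prop) [∀ b w, Decidable (Adj b w)] : Finset (B ≃ W) :=
  Finset.univ.filter fun f => ∀ b, Adj b (f b)

noncomputable def matchingPoly [CommSemiring R] (Adj : B → W → Prop) [∀ b w, Decidable (Adj b w)]
    (ε : (B ≃ W) → R) (ea eb : (B ≃ W) → ℕ) : MvPolynomial ((B × W) ⊕ Fin 2) R :=
  ∑ f ∈ perfectMatchings Adj, monomial (matchingExponent f (ea f) (eb f)) (ε f)

variable {Adj : B → W → Prop} [∀ b w, Decidable (Adj b w)] {ε : (B ≃ W) → R} {ea eb : (B ≃ W) → ℕ}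

theorem mem_perfectMatchings {f : B ≃ W} : f ∈ perfectMatchings Adj ↔ ∀ b, Adj b (f b) := by
  simp [perfectMatchings]

section CommSemiring

variable [CommSemiring R]

theorem exists_eq_matchingExponent_of_mem_support {m : (B × W) ⊕ Fin 2 →₀ ℕ}
    (hm : m ∈ (matchingPoly Adj ε ea eb).support) :
    ∃ f ∈ perfectMatchings Adj, m = matchingExponent f (ea f) (eb f) := by
  classical
  obtain ⟨f, hf, hmf⟩ := Finset.mem_biUnion.1 (support_sum hm)
  exact ⟨f, hf, Finset.mem_singleton.1 (support_monomial_subset hmf)⟩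

theorem coeff_matchingExponent_matchingPoly {f : B ≃ W} (hf : f ∈ perfectMatchings Adj) :
    coeff (matchingExponent f (ea f) (eb f)) (matchingPoly Adj ε ea eb) = ε f := by
  rw [matchingPoly, coeff_sum, Finset.sum_eq_single f (fun g _ hg => ?_) (absurd hf),
    coeff_monomial, if_pos rfl]
  exact (coeff_monomial _ _ _).trans (if_neg fun h => hg (eq_of_matchingExponent_eq h))

theorem inl_mem_vars_matchingPoly_iff (hε : ∀ f, ε f ≠ 0)
    (hnounused : NoUnusedEdges Adj) {b : B} {w : W} :
    Sum.inl (b, w) ∈ (matchingPoly Adj ε ea eb).vars ↔ Adj b w := by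
  rw [mem_vars_iff_mem_support]
  constructor
  · rintro ⟨m, hm, hbw⟩
    obtain ⟨f, hf, rfl⟩ := exists_eq_matchingExponent_of_mem_support hm
    rw [Finsupp.mem_support_iff, matchingExponent_inl, ite_ne_right_iff] at hbw
    exact hbw.1 ▸ mem_perfectMatchings.1 hf b
  · intro hbw
    obtain ⟨f, hf, rfl⟩ := hnounused b w hbw
    have hf' := mem_perfectMatchings.2 hf
    refine ⟨matchingExponent f (ea f) (eb f), mem_support_iff.2 ?_, ?_⟩
    · rw [coeff_matchingExponent_matchingPoly hf']
      exact hε f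
    · simp [matchingExponent_inl]

theorem degreeOf_inl_matchingPoly_le_one (e : B × W) :
    (matchingPoly Adj ε ea eb).degreeOf (Sum.inl e) ≤ 1 := by
  refine degreeOf_le_iff.2 fun m hm => ?_
  obtain ⟨f, -, rfl⟩ := exists_eq_matchingExponent_of_mem_support hm
  rw [matchingExponent_inl]
  split_ifs <;> omega

theorem apply_inl_add_apply_inl_le_one {m : (B × W) ⊕ Fin 2 →₀ ℕ}
    (hm : m ∈ (matchingPoly Adj ε ea eb).support) {e e' : B × W} (hne : e ≠ e')
    (hshare : e.1 = e'.1 ∨ e.2 = e'.2) : m (Sum.inl e) + m (Sum.inl e') ≤ 1 := by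
  obtain ⟨f, -, rfl⟩ := exists_eq_matchingExponent_of_mem_support hm
  obtain ⟨b, w⟩ := e
  obtain ⟨b', w'⟩ := e'
  simp only [matchingExponent_inl]
  split_ifs with h h' <;> try omega
  rcases hshare with rfl | rfl
  · exact absurd (by rw [← h, ← h']) hne
  · exact absurd (by rw [f.injective (h.trans h'.symm)]) hne

theorem aeval_killEdgesOutside_matchingPoly {f : B ≃ W} (hf : f ∈ perfectMatchings Adj) :
    aeval (killEdgesOutside f) (matchingPoly Adj ε ea eb) =
      monomial (matchingExponent f (ea f) (eb f)) (ε f) := by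
  simp only [matchingPoly, map_sum, aeval_killEdgesOutside_monomial_matchingExponent,
    Finset.sum_ite_eq', hf, if_true]

end CommSemiring

section Factor

variable [CommRing R] [NoZeroDivisors R] {p q : MvPolynomial ((B × W) ⊕ Fin 2) R}

variable (hp : p ≠ 0) (hq : q ≠ 0) (hpq : p * q = matchingPoly Adj ε ea eb)
include hp hq hpq

theorem adj_iff_inl_mem_vars_factor (hε : ∀ f, ε f ≠ 0)
    (hnounused : NoUnusedEdges Adj) {b : B} {w : W} :
    Adj b w ↔ Sum.inl (b, w) ∈ p.vars ∨ Sum.inl (b, w) ∈ q.vars := by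
  rw [← inl_mem_vars_matchingPoly_iff hε hnounused, ← hpq, mem_vars_mul_iff_of_ne_zero hp hq]

theorem inl_notMem_vars_right_of_mem_left {e : B × W} (he : Sum.inl e ∈ p.vars) :
    Sum.inl e ∉ q.vars := by
  intro he'
  have hdeg := degreeOf_inl_matchingPoly_le_one (Adj := Adj) (ε := ε) (ea := ea) (eb := eb) e
  rw [← hpq, degreeOf_mul_eq hp hq] at hdeg
  rw [mem_vars_iff_degreeOf_ne_zero] at he he'
  omega

theorem inl_mem_vars_left_of_share_vertex (hε : ∀ f, ε f ≠ 0)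
    (hnounused : NoUnusedEdges Adj)
    {e e' : B × W} (he : Sum.inl e ∈ p.vars) (he' : Adj e'.1 e'.2)
    (hshare : e.1 = e'.1 ∨ e.2 = e'.2) : Sum.inl e' ∈ p.vars := by
  by_contra he'p
  have he'q : Sum.inl e' ∈ q.vars :=
    ((adj_iff_inl_mem_vars_factor hp hq hpq hε hnounused).1 he').resolve_left he'p
  have hne : e ≠ e' := by rintro rfl; exact he'p he
  obtain ⟨m, hm, hle⟩ := exists_mem_support_mul_degreeOf_add_degreeOf_le
    (Sum.inl_injective.ne hne) hp hq he'p (inl_notMem_vars_right_of_mem_left hp hq hpq he)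
  rw [hpq] at hm
  have := apply_inl_add_apply_inl_le_one hm hne hshare
  rw [mem_vars_iff_degreeOf_ne_zero] at he he'q
  omega

theorem inl_mem_vars_left_of_connected (hε : ∀ f, ε f ≠ 0) (hnounused : NoUnusedEdges Adj)
    (hconn : ∀ x y, Relation.ReflTransGen (bipartiteRel Adj) x y) {b₀ : B} {w₀ : W}
    (h₀ : Adj b₀ w₀) (hp₀ : Sum.inl (b₀, w₀) ∈ p.vars) {b : B} {w : W} (h : Adj b w) :
    Sum.inl (b, w) ∈ p.vars :=
  forall_adj_of_connected hconn (fun b w => Sum.inl (b, w) ∈ p.vars)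
    (fun _ _ _ _ h' hS => inl_mem_vars_left_of_share_vertex hp hq hpq hε hnounused hS h'
      (Or.inl rfl))
    (fun _ _ _ _ h' hS => inl_mem_vars_left_of_share_vertex hp hq hpq hε hnounused hS h'
      (Or.inr rfl))
    h₀ hp₀ h

end Factor

theorem exists_eq_C_mul_X_pow_mul_X_pow_of_dvd_matchingPoly [CommRing R] [NoZeroDivisors R]
    {Q : MvPolynomial ((B × W) ⊕ Fin 2) R} (hε : ∀ f, ε f ≠ 0)
    (hP : matchingPoly Adj ε ea eb ≠ 0) (hQ : Q ∣ matchingPoly Adj ε ea eb)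
    (hvars : ∀ e, Sum.inl e ∉ Q.vars) :
    ∃ (r : R) (i j : ℕ), Q = C r * X (Sum.inr 0) ^ i * X (Sum.inr 1) ^ j := by
  obtain ⟨m, hm⟩ := support_nonempty.2 hP
  obtain ⟨f, hf, -⟩ := exists_eq_matchingExponent_of_mem_support hm
  have hfix : aeval (killEdgesOutside (R := R) f) Q = Q := aeval_eq_self_of_forall_mem_vars fun
    | Sum.inl e, he => absurd he (hvars e)
    | Sum.inr _, _ => rfl
  have hdvd := map_dvd (aeval (killEdgesOutside (R := R) f)) hQ
  rw [hfix, aeval_killEdgesOutside_matchingPoly hf] at hdvd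
  obtain ⟨m', r, -, -, rfl⟩ := (dvd_monomial_iff_exists (hε f)).1 hdvd
  exact exists_monomial_eq_C_mul_X_pow_mul_X_pow hvars

end Matching

theorem stmt_14_general {B W : Type*} [Fintype B] [Fintype W] [DecidableEq B] [DecidableEq W]
    (Adj : B → W → Prop) [∀ b w, Decidable (Adj b w)]
    (hconn : ∀ x y : B ⊕ W, Relation.ReflTransGen
      (fun p q => ∃ b w, Adj b w ∧
        ((p = Sum.inl b ∧ q = Sum.inr w) ∨ (p = Sum.inr w ∧ q = Sum.inl b))) x y)
    (hnounused : ∀ b w, Adj b w →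
      ∃ f : B ≃ W, (∀ b', Adj b' (f b')) ∧ f b = w)
    (ε : (B ≃ W) → ℝ) (hε : ∀ f, ε f = 1 ∨ ε f = -1)
    (ea eb : (B ≃ W) → ℕ)
    (P : MvPolynomial ((B × W) ⊕ Fin 2) ℝ)
    (hP : P = ∑ f ∈ Finset.univ.filter (fun f : B ≃ W => ∀ b, Adj b (f b)),
      C (ε f) * X (Sum.inr 0) ^ (ea f) * X (Sum.inr 1) ^ (eb f) *
        ∏ b : B, X (Sum.inl (b, f b)))
    (P₁ P₂ : MvPolynomial ((B × W) ⊕ Fin 2) ℝ)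
    (hfac : P = P₁ * P₂) :
    (∃ (r : ℝ) (i j : ℕ),
        P₁ = C r * X (Sum.inr 0) ^ i * X (Sum.inr 1) ^ j) ∨
      (∃ (r : ℝ) (i j : ℕ),
        P₂ = C r * X (Sum.inr 0) ^ i * X (Sum.inr 1) ^ j) := by
  have hε0 : ∀ f, ε f ≠ 0 := fun f => by rcases hε f with h | h <;> simp [h]
  have hPm : P₁ * P₂ = matchingPoly Adj ε ea eb := by
    simp only [← hfac, hP, matchingPoly, perfectMatchings, monomial_matchingExponent]
  rcases eq_or_ne P₁ 0 with rfl | hP₁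
  · exact Or.inl ⟨0, 0, 0, by simp⟩
  rcases eq_or_ne P₂ 0 with rfl | hP₂
  · exact Or.inr ⟨0, 0, 0, by simp⟩
  have hPne : matchingPoly Adj ε ea eb ≠ 0 := hPm ▸ mul_ne_zero hP₁ hP₂
  by_cases h : ∃ b w, Adj b w ∧ Sum.inl (b, w) ∈ P₁.vars
  · obtain ⟨b₀, w₀, h₀, hP₁₀⟩ := h
    refine Or.inr (exists_eq_C_mul_X_pow_mul_X_pow_of_dvd_matchingPoly hε0 hPne
      (hPm ▸ dvd_mul_left P₂ P₁) fun ⟨b, w⟩ hbw => ?_)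
    have hadj := (adj_iff_inl_mem_vars_factor hP₁ hP₂ hPm hε0 hnounused).2 (Or.inr hbw)
    exact inl_notMem_vars_right_of_mem_left hP₁ hP₂ hPm
      (inl_mem_vars_left_of_connected hP₁ hP₂ hPm hε0 hnounused hconn h₀ hP₁₀ hadj) hbw
  · refine Or.inl (exists_eq_C_mul_X_pow_mul_X_pow_of_dvd_matchingPoly hε0 hPne
      (hPm ▸ dvd_mul_right P₁ P₂) fun ⟨b, w⟩ hbw => h ⟨b, w, ?_, hbw⟩)
    exact (adj_iff_inl_mem_vars_factor hP₁ hP₂ hPm hε0 hnounused).2 (Or.inl hbw)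

/-- Let `G` be a finite connected balanced bipartite graph with no
unused edges, and let `P` be the polynomial in the edge-weight variables `ν(e)` and
`α, β` whose monomials are exactly the products `∏_{e ∈ M} ν(e)` over perfect
matchings `M` of `G`, each with coefficient a sign `±1` times a monomial in `α, β`.
Then in any factorization `P = P₁ P₂`, one of the factors is a monomial in `α` and
`β` alone. -/
theorem stmt_14 {B W : Type*} [Fintype B] [Fintype W] [DecidableEq B] [DecidableEq W]
    (Adj : B → W → Prop) [∀ b w, Decidable (Adj b w)]
    (hconn : ∀ x y : B ⊕ W, Relation.ReflTransGen
      (fun p q => ∃ b w, Adj b w ∧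
        ((p = Sum.inl b ∧ q = Sum.inr w) ∨ (p = Sum.inr w ∧ q = Sum.inl b))) x y)
    (hnounused : ∀ b w, Adj b w →
      ∃ f : B ≃ W, (∀ b', Adj b' (f b')) ∧ f b = w)
    (hmatch : ∃ f : B ≃ W, ∀ b, Adj b (f b))
    (ε : (B ≃ W) → ℝ) (hε : ∀ f, ε f = 1 ∨ ε f = -1)
    (ea eb : (B ≃ W) → ℕ)
    (P : MvPolynomial ((B × W) ⊕ Fin 2) ℝ)
    (hP : P = ∑ f ∈ Finset.univ.filter (fun f : B ≃ W => ∀ b, Adj b (f b)),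
      C (ε f) * X (Sum.inr 0) ^ (ea f) * X (Sum.inr 1) ^ (eb f) *
        ∏ b : B, X (Sum.inl (b, f b)))
    (P₁ P₂ : MvPolynomial ((B × W) ⊕ Fin 2) ℝ)
    (hfac : P = P₁ * P₂) :
    (∃ (r : ℝ) (i j : ℕ),
        P₁ = C r * X (Sum.inr 0) ^ i * X (Sum.inr 1) ^ j) ∨
      (∃ (r : ℝ) (i j : ℕ),
        P₂ = C r * X (Sum.inr 0) ^ i * X (Sum.inr 1) ^ j) :=
  stmt_14_general Adj hconn hnounused ε hε ea eb P hP P₁ P₂ hfac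
end
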